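/- Let T > 0, K ≥ 0, β ∈ ℝ, ε₁ > 0, C₁ ≥ 0 and θ ∈ [0,1), with β > ε₁. Let y : [0, T+K] → [0,∞) be continuous and z : [0, T+K] → [0,∞) be integrable, with y(t) = 0 for all t ∈ [T, T+K] and z(t) = 0 for almost every t ∈ [T, T+K]. Suppose that for every t ∈ [0,T], e^{βt} y(t) + β ∫_t^T e^{βs} y(s) ds + ∫_t^T e^{βs} z(s) ds ≤ (ε₁ + C₁) ∫_t^{T+K} e^{βs} y(s) ds + θ ∫_t^{T+K} e^{βs} z(s) ds. Then y(t) = 0 for all t ∈ [0, T+K] and z(t) = 0 for almost every t ∈ [0, T+K]. -/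

import Mathlib

open MeasureTheory Set Real intervalIntegral

/-!
Write `f = e^{βs} y` and `g = e^{βs} z`. Since both vanish on `[T, T+K]`, the hypothesis reads
`f t + ∫_t^T g ≤ L ∫_t^T f + θ ∫_t^T g` on `[0, T]` with `L = ε₁ + C₁ - β`. As `θ < 1`, the
`g`-terms can be dropped, leaving `f t ≤ L ∫_t^T f`; backward Gronwall (`e^{Lt} ∫_t^T f` is
nondecreasing and vanishes at `T`) forces `f = 0`. Then at `t = 0` the inequality gives
`(1 - θ) ∫_0^T g ≤ 0`, so `g = 0` a.e.
-/

theorem integral_nonpos_of_le_mul_integral {f : ℝ → ℝ} {a b L : ℝ}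
    (hf : ContinuousOn f (Icc a b)) (hle : ∀ t ∈ Ioo a b, f t ≤ L * ∫ s in t..b, f s) :
    ∀ t ∈ Icc a b, ∫ s in t..b, f s ≤ 0 := by
  intro t ht
  have hab : a ≤ b := ht.1.trans ht.2
  have hF : ContinuousOn (fun u => ∫ s in u..b, f s) (Icc a b) := by
    rw [← uIcc_of_le hab] at hf ⊢
    exact continuousOn_primitive_interval_left hf.integrableOn_Icc
  have hF' : ∀ u ∈ Ioo a b, HasDerivAt (fun u => ∫ s in u..b, f s) (-f u) u := fun u hu =>
    integral_hasDerivAt_left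
      ((hf.mono (Icc_subset_Icc_left hu.1.le)).intervalIntegrable_of_Icc hu.2.le)
      ((hf.mono Ioo_subset_Icc_self).stronglyMeasurableAtFilter isOpen_Ioo u hu)
      (hf.continuousAt (Icc_mem_nhds hu.1 hu.2))
  have hmono : MonotoneOn (fun u => exp (L * u) * ∫ s in u..b, f s) (Icc a b) := by
    refine monotoneOn_of_hasDerivWithinAt_nonneg (convex_Icc a b)
      (f' := fun u => exp (L * u) * (L * (∫ s in u..b, f s) - f u))
      ((continuous_exp.comp (continuous_const_mul L)).continuousOn.mul hF) (fun u hu => ?_)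
      (fun u hu => ?_) <;> rw [interior_Icc] at hu
    · exact ((((hasDerivAt_id u).const_mul L).exp.mul (hF' u hu)).congr_deriv
        (by simp only [id, mul_one]; ring)).hasDerivWithinAt
    · exact mul_nonneg (exp_pos _).le (sub_nonneg.2 (hle u hu))
  have hGt : exp (L * t) * (∫ s in t..b, f s) ≤ exp (L * b) * ∫ s in b..b, f s :=
    hmono ht (right_mem_Icc.2 hab) ht.2
  rw [integral_same, mul_zero] at hGt
  exact nonpos_of_mul_nonpos_right hGt (exp_pos _)

theorem eqOn_zero_and_ae_eq_zero_of_le_integral {f g : ℝ → ℝ} {a b L θ : ℝ} (hab : a ≤ b)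
    (hθ : θ < 1) (hf : ContinuousOn f (Icc a b)) (hf0 : ∀ t ∈ Icc a b, 0 ≤ f t)
    (hg : IntegrableOn g (Icc a b)) (hg0 : ∀ t ∈ Icc a b, 0 ≤ g t)
    (h : ∀ t ∈ Icc a b,
      f t + ∫ s in t..b, g s ≤ L * (∫ s in t..b, f s) + θ * ∫ s in t..b, g s) :
    EqOn f 0 (Icc a b) ∧ ∀ᵐ t ∂(volume.restrict (Icc a b)), g t = 0 := by
  have hint_nonneg : ∀ {u : ℝ → ℝ}, (∀ t ∈ Icc a b, 0 ≤ u t) →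
      ∀ t ∈ Icc a b, 0 ≤ ∫ s in t..b, u s := fun hu t ht =>
    integral_nonneg ht.2 fun s hs => hu s ⟨ht.1.trans hs.1, hs.2⟩
  have hfL : ∀ t ∈ Icc a b, f t ≤ L * ∫ s in t..b, f s := fun t ht => by
    linarith [h t ht, mul_le_of_le_one_left (hint_nonneg hg0 t ht) hθ.le]
  have hF : ∀ t ∈ Icc a b, ∫ s in t..b, f s = 0 := fun t ht =>
    le_antisymm (integral_nonpos_of_le_mul_integral hf
      (fun u hu => hfL u (Ioo_subset_Icc_self hu)) t ht) (hint_nonneg hf0 t ht)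
  refine ⟨fun t ht => le_antisymm ?_ (hf0 t ht), ?_⟩
  · simpa only [hF t ht, mul_zero, Pi.zero_apply] using hfL t ht
  have ha : a ∈ Icc a b := left_mem_Icc.2 hab
  have hG : ∫ s in a..b, g s = 0 := by
    have := h a ha
    rw [hF a ha, mul_zero, zero_add] at this
    nlinarith [hf0 a ha, hint_nonneg hg0 a ha]
  rw [← Measure.restrict_congr_set Ioc_ae_eq_Icc]
  refine (integral_eq_zero_iff_of_le_of_nonneg_ae hab ?_
    ((intervalIntegrable_iff_integrableOn_Icc_of_le hab).2 hg)).1 hG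
  exact (ae_restrict_iff' measurableSet_Ioc).2
    (ae_of_all _ fun t ht => hg0 t (Ioc_subset_Icc_self ht))

theorem integral_eq_of_ae_eq_zero_Icc {u : ℝ → ℝ} {a b c t : ℝ} (hu : IntegrableOn u (Icc a c))
    (ht : t ∈ Icc a b) (hbc : b ≤ c) (h0 : ∀ᵐ s ∂(volume.restrict (Icc b c)), u s = 0) :
    ∫ s in t..c, u s = ∫ s in t..b, u s := by
  have hii : ∀ x ∈ Icc a c, ∀ y ∈ Icc a c, IntervalIntegrable u volume x y :=
    fun x hx y hy => (hu.mono_set (uIcc_subset_Icc hx hy)).intervalIntegrable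
  have hb : b ∈ Icc a c := ⟨ht.1.trans ht.2, hbc⟩
  have hc : c ∈ Icc a c := ⟨hb.1.trans hbc, le_rfl⟩
  have htail : ∫ s in b..c, u s = 0 := by
    refine integral_zero_ae ?_
    filter_upwards [(ae_restrict_iff' measurableSet_Icc).1 h0] with s hs hsbc
    exact hs (Ioc_subset_Icc_self (uIoc_of_le hbc ▸ hsbc))
  rw [← integral_add_adjacent_intervals (hii t ⟨ht.1, ht.2.trans hbc⟩ b hb) (hii b hb c hc),
    htail, add_zero]

theorem uniqueness_skeleton_general (T K β ε₁ C₁ θ : ℝ)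
    (hK : 0 ≤ K)
    (hθ1 : θ < 1)
    (y z : ℝ → ℝ)
    (hy_cont : ContinuousOn y (Set.Icc 0 (T + K)))
    (hy_nonneg : ∀ t ∈ Set.Icc (0:ℝ) (T + K), 0 ≤ y t)
    (hz_int : IntegrableOn z (Set.Icc 0 (T + K)))
    (hz_nonneg : ∀ t ∈ Set.Icc (0:ℝ) (T + K), 0 ≤ z t)
    (hy_zero : ∀ t ∈ Set.Icc T (T + K), y t = 0)
    (hz_zero : ∀ᵐ t ∂(volume.restrict (Set.Icc T (T + K))), z t = 0)
    (h : ∀ t ∈ Set.Icc (0:ℝ) T,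
      Real.exp (β * t) * y t + β * (∫ s in t..T, Real.exp (β * s) * y s)
          + ∫ s in t..T, Real.exp (β * s) * z s
        ≤ (ε₁ + C₁) * (∫ s in t..(T + K), Real.exp (β * s) * y s)
          + θ * ∫ s in t..(T + K), Real.exp (β * s) * z s) :
    (∀ t ∈ Set.Icc (0:ℝ) (T + K), y t = 0) ∧
      (∀ᵐ t ∂(volume.restrict (Set.Icc (0:ℝ) (T + K))), z t = 0) := by
  rcases lt_or_ge T 0 with hT | hT
  · have hsub : Icc 0 (T + K) ⊆ Icc T (T + K) := Icc_subset_Icc_left hT.le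
    exact ⟨fun t ht => hy_zero t (hsub ht), ae_restrict_of_ae_restrict_of_subset hsub hz_zero⟩
  have hTK : T ≤ T + K := le_add_of_nonneg_right hK
  have hsub : Icc 0 T ⊆ Icc 0 (T + K) := Icc_subset_Icc_right hTK
  have hexp : ContinuousOn (fun s => exp (β * s)) (Icc 0 (T + K)) := by fun_prop
  have hf : ContinuousOn (fun s => exp (β * s) * y s) (Icc 0 (T + K)) := hexp.mul hy_cont
  have hg := hz_int.continuousOn_mul hexp isCompact_Icc
  have hf_tail : ∀ᵐ s ∂(volume.restrict (Icc T (T + K))), exp (β * s) * y s = 0 :=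
    (ae_restrict_iff' measurableSet_Icc).2 (ae_of_all _ fun s hs => by simp [hy_zero s hs])
  have hg_tail : ∀ᵐ s ∂(volume.restrict (Icc T (T + K))), exp (β * s) * z s = 0 :=
    hz_zero.mono fun s hs => by simp [hs]
  obtain ⟨hf0, hg0⟩ := eqOn_zero_and_ae_eq_zero_of_le_integral (L := ε₁ + C₁ - β) hT hθ1
    (hf.mono hsub) (fun t ht => mul_nonneg (exp_pos _).le (hy_nonneg t (hsub ht)))
    (hg.mono_set hsub) (fun t ht => mul_nonneg (exp_pos _).le (hz_nonneg t (hsub ht)))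
    fun t ht => by
      have := h t ht
      rw [integral_eq_of_ae_eq_zero_Icc hf.integrableOn_Icc ht hTK hf_tail,
        integral_eq_of_ae_eq_zero_Icc hg ht hTK hg_tail] at this
      linarith
  refine ⟨fun t ht => (le_total t T).elim (fun htT => ?_) (fun hTt => hy_zero t ⟨hTt, ht.2⟩), ?_⟩
  · exact (mul_eq_zero.1 (hf0 ⟨ht.1, htT⟩)).resolve_left (exp_ne_zero _)
  rw [← Icc_union_Icc_eq_Icc hT hTK, ae_restrict_union_iff]
  exact ⟨hg0.mono fun s hs => (mul_eq_zero.1 hs).resolve_left (exp_ne_zero _), hz_zero⟩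

/-- Deterministic skeleton of the uniqueness argument for the reflected anticipated
BDSDE: if nonnegative `y` (continuous) and `z` (integrable) vanish on `[T, T+K]` and
satisfy the a priori inequality
`e^{βt} y t + β ∫_t^T e^{βs} y + ∫_t^T e^{βs} z
  ≤ (ε₁ + C₁) ∫_t^{T+K} e^{βs} y + θ ∫_t^{T+K} e^{βs} z`
for every `t ∈ [0, T]`, with `θ < 1` and `β > ε₁`, then `y ≡ 0` on `[0, T+K]`
and `z = 0` a.e. on `[0, T+K]`. -/
theorem uniqueness_skeleton (T K β ε₁ C₁ θ : ℝ)
    (hT : 0 < T) (hK : 0 ≤ K) (hε₁ : 0 < ε₁) (hC₁ : 0 ≤ C₁)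
    (hθ0 : 0 ≤ θ) (hθ1 : θ < 1) (hβ : ε₁ < β)
    (y z : ℝ → ℝ)
    (hy_cont : ContinuousOn y (Set.Icc 0 (T + K)))
    (hy_nonneg : ∀ t ∈ Set.Icc (0:ℝ) (T + K), 0 ≤ y t)
    (hz_int : IntegrableOn z (Set.Icc 0 (T + K)))
    (hz_nonneg : ∀ t ∈ Set.Icc (0:ℝ) (T + K), 0 ≤ z t)
    (hy_zero : ∀ t ∈ Set.Icc T (T + K), y t = 0)
    (hz_zero : ∀ᵐ t ∂(volume.restrict (Set.Icc T (T + K))), z t = 0)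
    (h : ∀ t ∈ Set.Icc (0:ℝ) T,
      Real.exp (β * t) * y t + β * (∫ s in t..T, Real.exp (β * s) * y s)
          + ∫ s in t..T, Real.exp (β * s) * z s
        ≤ (ε₁ + C₁) * (∫ s in t..(T + K), Real.exp (β * s) * y s)
          + θ * ∫ s in t..(T + K), Real.exp (β * s) * z s) :
    (∀ t ∈ Set.Icc (0:ℝ) (T + K), y t = 0) ∧
      (∀ᵐ t ∂(volume.restrict (Set.Icc (0:ℝ) (T + K))), z t = 0) :=
  uniqueness_skeleton_general T K β ε₁ C₁ θ hK hθ1 y z hy_cont hy_nonneg hz_int hz_nonneg hy_zero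
    hz_zero h
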